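/- Let C be a set-consensus collection, and extend the definition by SCN_0^C = 0. Then for every j ≥ 1 the Knapsack dynamic-programming recurrence holds: SCN_j^C = max{ ℓ' + SCN_{j-j'}^C : (ℓ',j') ∈ C, j' ≤ j }, where the set over which the maximum is taken is nonempty since (1,1) ∈ C. -/
import Mathlib


/-- A set-consensus collection: a finite set of pairs `(ℓ, j)` of positive integers
with `j ≤ ℓ`, containing `(1, 1)`. -/
def IsSCC (C : Finset (ℕ × ℕ)) : Prop :=
  (1, 1) ∈ C ∧ ∀ p ∈ C, 0 < p.2 ∧ p.2 ≤ p.1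

/-- The agreement level `AL_n^C`: the minimum of `∑ j·x(ℓ,j)` over all `x : C → ℕ`
with `∑ ℓ·x(ℓ,j) ≥ n`. -/
noncomputable def AL (C : Finset (ℕ × ℕ)) (n : ℕ) : ℕ :=
  sInf {k | ∃ x : ℕ × ℕ → ℕ, n ≤ ∑ p ∈ C, p.1 * x p ∧ k = ∑ p ∈ C, p.2 * x p}

/-- The `j`-set-consensus number `SCN_j^C`: the maximum `n` such that `AL_n^C ≤ j`. -/
noncomputable def SCN (C : Finset (ℕ × ℕ)) (j : ℕ) : ℕ :=
  sSup {n | AL C n ≤ j}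

/-- `SCN` extended by the convention `SCN_0^C = 0`. -/
noncomputable def SCN0 (C : Finset (ℕ × ℕ)) (j : ℕ) : ℕ :=
  if j = 0 then 0 else SCN C j

open Finset in
lemma AL_le (C : Finset (ℕ × ℕ)) (n : ℕ) (x : ℕ × ℕ → ℕ)
    (h : n ≤ ∑ p ∈ C, p.1 * x p) : AL C n ≤ ∑ p ∈ C, p.2 * x p :=
  Nat.sInf_le ⟨x, h, rfl⟩

lemma AL_set_nonempty (C : Finset (ℕ × ℕ)) (hC : IsSCC C) (n : ℕ) :
    {k | ∃ x : ℕ × ℕ → ℕ, n ≤ ∑ p ∈ C, p.1 * x p ∧ k = ∑ p ∈ C, p.2 * x p}.Nonempty := by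
  classical
  refine ⟨∑ p ∈ C, p.2 * (if p = (1,1) then n else 0),
    fun p => if p = (1,1) then n else 0, ?_, rfl⟩
  have : ∑ p ∈ C, p.1 * (if p = (1,1) then n else 0) = n := by
    rw [Finset.sum_eq_single (1,1)]
    · simp
    · intro b _ hne; rw [if_neg hne, Nat.mul_zero]
    · intro h; exact absurd hC.1 h
  rw [this]

lemma AL_mem (C : Finset (ℕ × ℕ)) (hC : IsSCC C) (n : ℕ) :
    ∃ x : ℕ × ℕ → ℕ, n ≤ ∑ p ∈ C, p.1 * x p ∧ AL C n = ∑ p ∈ C, p.2 * x p :=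
  Nat.sInf_mem (AL_set_nonempty C hC n)

lemma sum_le_L (C : Finset (ℕ × ℕ)) (hC : IsSCC C) (x : ℕ × ℕ → ℕ) :
    ∑ p ∈ C, p.1 * x p ≤ (C.sup Prod.fst) * ∑ p ∈ C, p.2 * x p := by
  rw [Finset.mul_sum]
  apply Finset.sum_le_sum
  intro p hp
  have h2 := hC.2 p hp
  have hL : p.1 ≤ C.sup Prod.fst := Finset.le_sup (f := Prod.fst) hp
  calc p.1 * x p ≤ (C.sup Prod.fst) * x p := Nat.mul_le_mul_right _ hL
  _ ≤ C.sup Prod.fst * (p.2 * x p) := by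
      apply Nat.mul_le_mul_left
      exact Nat.le_mul_of_pos_left _ h2.1

lemma scn_bdd (C : Finset (ℕ × ℕ)) (hC : IsSCC C) (j : ℕ) :
    ∀ n, AL C n ≤ j → n ≤ (C.sup Prod.fst) * j := by
  intro n hn
  obtain ⟨x, hx, he⟩ := AL_mem C hC n
  calc n ≤ ∑ p ∈ C, p.1 * x p := hx
  _ ≤ (C.sup Prod.fst) * ∑ p ∈ C, p.2 * x p := sum_le_L C hC x
  _ ≤ (C.sup Prod.fst) * j := Nat.mul_le_mul_left _ (he ▸ hn)

lemma AL_zero_le (C : Finset (ℕ × ℕ)) (j : ℕ) : AL C 0 ≤ j := by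
  have h := AL_le C 0 (fun _ => 0) (by simp)
  simp only [Nat.mul_zero, Finset.sum_const_zero] at h
  omega

lemma SCN_spec (C : Finset (ℕ × ℕ)) (hC : IsSCC C) (j : ℕ) : AL C (SCN C j) ≤ j := by
  have h := Nat.sSup_mem (s := {n | AL C n ≤ j}) ⟨0, AL_zero_le C j⟩
    ⟨(C.sup Prod.fst) * j, fun n hn => scn_bdd C hC j n hn⟩
  exact h

lemma le_SCN (C : Finset (ℕ × ℕ)) (hC : IsSCC C) (j n : ℕ) (h : AL C n ≤ j) :
    n ≤ SCN C j :=
  le_csSup ⟨(C.sup Prod.fst) * j, fun m hm => scn_bdd C hC j m hm⟩ h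

lemma SCN_zero (C : Finset (ℕ × ℕ)) (hC : IsSCC C) : SCN C 0 = 0 := by
  have h := SCN_spec C hC 0
  obtain ⟨x, hx, he⟩ := AL_mem C hC (SCN C 0)
  have hz : ∑ p ∈ C, p.2 * x p = 0 := by omega
  have hx0 : ∀ p ∈ C, x p = 0 := by
    intro p hp
    have := (Finset.sum_eq_zero_iff).mp hz p hp
    have := (hC.2 p hp).1
    exact by nlinarith
  have : ∑ p ∈ C, p.1 * x p = 0 :=
    Finset.sum_eq_zero (fun p hp => by rw [hx0 p hp, Nat.mul_zero])
  omega

lemma SCN0_eq (C : Finset (ℕ × ℕ)) (hC : IsSCC C) (j : ℕ) : SCN0 C j = SCN C j := by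
  unfold SCN0
  split
  · rw [‹j = 0›, SCN_zero C hC]
  · rfl

lemma sum_update (C : Finset (ℕ × ℕ)) {p : ℕ × ℕ} (hp : p ∈ C) (f x : ℕ × ℕ → ℕ) (c : ℕ) :
    ∑ q ∈ C, f q * Function.update x p c q = f p * c + ∑ q ∈ C.erase p, f q * x q := by
  classical
  rw [← Finset.add_sum_erase C (fun q => f q * Function.update x p c q) hp]
  congr 1
  · rw [Function.update_self]
  · apply Finset.sum_congr rfl
    intro q hq
    rw [Function.update_of_ne (Finset.mem_erase.mp hq).1]

lemma sum_split (C : Finset (ℕ × ℕ)) {p : ℕ × ℕ} (hp : p ∈ C) (f x : ℕ × ℕ → ℕ) :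
    ∑ q ∈ C, f q * x q = f p * x p + ∑ q ∈ C.erase p, f q * x q :=
  (Finset.add_sum_erase C (fun q => f q * x q) hp).symm

theorem stmt_15 (C : Finset (ℕ × ℕ)) (hC : IsSCC C) (j : ℕ) (hj : 1 ≤ j) :
    {k | ∃ ℓ' j' : ℕ, (ℓ', j') ∈ C ∧ j' ≤ j ∧ k = ℓ' + SCN0 C (j - j')}.Nonempty ∧
    SCN C j =
      sSup {k | ∃ ℓ' j' : ℕ, (ℓ', j') ∈ C ∧ j' ≤ j ∧ k = ℓ' + SCN0 C (j - j')} := by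
  classical
  set L := C.sup Prod.fst with hL
  set T := {k | ∃ ℓ' j' : ℕ, (ℓ', j') ∈ C ∧ j' ≤ j ∧ k = ℓ' + SCN0 C (j - j')} with hT
  have hTne : T.Nonempty := ⟨1 + SCN0 C (j - 1), 1, 1, hC.1, hj, rfl⟩
  have hTbdd : BddAbove T := by
    refine ⟨L + L * j, ?_⟩
    rintro k ⟨ℓ', j', hp, hj', rfl⟩
    have h1 : ℓ' ≤ L := Finset.le_sup (f := Prod.fst) hp
    have h2 : SCN0 C (j - j') ≤ L * j := by
      rw [SCN0_eq C hC]
      have := scn_bdd C hC (j - j') _ (SCN_spec C hC (j - j'))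
      have : SCN C (j - j') ≤ L * (j - j') := this
      calc SCN C (j - j') ≤ L * (j - j') := this
      _ ≤ L * j := Nat.mul_le_mul_left _ (Nat.sub_le _ _)
    omega
  refine ⟨hTne, le_antisymm ?_ (csSup_le hTne ?_)⟩
  · -- SCN C j ≤ sSup T
    set n := SCN C j with hn
    rcases Nat.eq_zero_or_pos n with h0 | hpos
    · rw [h0]; exact Nat.zero_le _
    obtain ⟨x, hx, he⟩ := AL_mem C hC n
    have hALn : AL C n ≤ j := SCN_spec C hC j
    -- find p with x p ≠ 0
    have hex : ∃ p ∈ C, x p ≠ 0 := by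
      by_contra h
      push_neg at h
      have : ∑ p ∈ C, p.1 * x p = 0 :=
        Finset.sum_eq_zero (fun p hp => by rw [h p hp, Nat.mul_zero])
      omega
    obtain ⟨p, hp, hxp⟩ := hex
    obtain ⟨ℓ', j'⟩ := p
    set x' := Function.update x (ℓ', j') (x (ℓ', j') - 1) with hx'
    have hs1 : ∑ q ∈ C, q.1 * x q = ℓ' + ∑ q ∈ C, q.1 * x' q := by
      rw [sum_split C hp (fun q => q.1) x, sum_update C hp (fun q => q.1) x]
      dsimp only
      have h1 : x (ℓ', j') = (x (ℓ', j') - 1) + 1 := by omega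
      have key : ℓ' * x (ℓ', j') = ℓ' + ℓ' * (x (ℓ', j') - 1) := by
        nth_rewrite 1 [h1]; ring
      omega
    have hs2 : ∑ q ∈ C, q.2 * x q = j' + ∑ q ∈ C, q.2 * x' q := by
      rw [sum_split C hp (fun q => q.2) x, sum_update C hp (fun q => q.2) x]
      dsimp only
      have h1 : x (ℓ', j') = (x (ℓ', j') - 1) + 1 := by omega
      have key : j' * x (ℓ', j') = j' + j' * (x (ℓ', j') - 1) := by
        nth_rewrite 1 [h1]; ring
      omega
    have hj' : j' ≤ j := by
      have : j' ≤ ∑ q ∈ C, q.2 * x q := by omega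
      omega
    have hAL' : AL C (∑ q ∈ C, q.1 * x' q) ≤ j - j' := by
      have := AL_le C (∑ q ∈ C, q.1 * x' q) x' le_rfl
      omega
    have hle : ∑ q ∈ C, q.1 * x' q ≤ SCN C (j - j') := le_SCN C hC _ _ hAL'
    have hk : (ℓ' + SCN0 C (j - j')) ∈ T := ⟨ℓ', j', hp, hj', rfl⟩
    have : n ≤ ℓ' + SCN0 C (j - j') := by
      rw [SCN0_eq C hC]
      omega
    exact this.trans (le_csSup hTbdd hk)
  · -- each element of T ≤ SCN C j
    rintro k ⟨ℓ', j', hp, hj', rfl⟩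
    rw [SCN0_eq C hC]
    set m := SCN C (j - j') with hm
    obtain ⟨x, hx, he⟩ := AL_mem C hC m
    have hALm : AL C m ≤ j - j' := SCN_spec C hC (j - j')
    set x'' := Function.update x (ℓ', j') (x (ℓ', j') + 1) with hx''
    have hs1 : ∑ q ∈ C, q.1 * x'' q = ℓ' + ∑ q ∈ C, q.1 * x q := by
      rw [sum_update C hp (fun q => q.1) x, sum_split C hp (fun q => q.1) x]
      dsimp only
      have key : ℓ' * (x (ℓ', j') + 1) = ℓ' + ℓ' * x (ℓ', j') := by ring
      omega
    have hs2 : ∑ q ∈ C, q.2 * x'' q = j' + ∑ q ∈ C, q.2 * x q := by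
      rw [sum_update C hp (fun q => q.2) x, sum_split C hp (fun q => q.2) x]
      dsimp only
      have key : j' * (x (ℓ', j') + 1) = j' + j' * x (ℓ', j') := by ring
      omega
    have : AL C (ℓ' + m) ≤ j := by
      have h1 := AL_le C (ℓ' + m) x'' (by omega)
      omega
    exact le_SCN C hC j _ this
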